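/- Let p ∈ (1,∞). Then K(y) → ∞ as y → 0⁺. -/

import Mathlib

open Set Real Filter MeasureTheory

/-- `F_a(y,w)` from the paper (with parameter `p`). -/
noncomputable def Fa (p a y w : ℝ) : ℝ :=
  (8*p*(1/a + 2*y) + (2*p/a + 4*(3*p - 2)*y + 2*(p - 1)*y*w)*w) / (y^2 * (4 + (p - 1)*w))

/-- `G` is the family `a ↦ G_a` of solutions of `G_a' = -F_a(y, G_a)` on `(0,1)`
with `G_a(1) = 0`: each `G_a` is continuous on `(0,1]`, positive on `(0,1)` and
strictly decreasing on `(0,1]`. -/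
def IsGFamily (p : ℝ) (G : ℝ → ℝ → ℝ) : Prop :=
  ∀ a : ℝ, 0 < a →
    ContinuousOn (G a) (Set.Ioc 0 1) ∧
    G a 1 = 0 ∧
    (∀ y ∈ Set.Ioo (0:ℝ) 1, HasDerivAt (G a) (-(Fa p a y (G a y))) y) ∧
    (∀ y ∈ Set.Ioo (0:ℝ) 1, 0 < G a y) ∧
    StrictAntiOn (G a) (Set.Ioc 0 1)

/-!
Since `F_a(y,w) ≥ 4/y` for all `w ≥ 0`, the function `G_a(y) + 4 log y` is decreasing on
`(0,1]` and vanishes at `1`, so `G_a(y) ≥ -4 log y` for every `a`. The bound is uniform in `a`,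
hence passes to the limit `K`, and `-4 log y → ∞` as `y → 0⁺`.
-/

theorem four_div_le_Fa {p a y w : ℝ} (hp : 1 ≤ p) (ha : 0 < a) (hy : 0 < y) (hw : 0 ≤ w) :
    4 / y ≤ Fa p a y w := by
  obtain ⟨q, hq, rfl⟩ : ∃ q, 0 ≤ q ∧ p = q + 1 := ⟨p - 1, by linarith, by ring⟩
  rw [Fa, div_le_div_iff₀ hy (by positivity)]
  -- with `p = q + 1` the difference of the two sides has only nonnegative monomials
  rw [← sub_nonneg]
  ring_nf
  positivity

theorem sub_mul_log_le_of_hasDerivAt_le {g g' : ℝ → ℝ} {c y : ℝ}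
    (hcont : ContinuousOn g (Ioc 0 1)) (hderiv : ∀ x ∈ Ioo (0:ℝ) 1, HasDerivAt g (g' x) x)
    (hle : ∀ x ∈ Ioo (0:ℝ) 1, g' x ≤ -c / x) (hy : y ∈ Ioc (0:ℝ) 1) :
    g 1 - c * log y ≤ g y := by
  have hderiv' : ∀ x ∈ Ioo (0:ℝ) 1, HasDerivAt (fun t => g t + c * log t) (g' x + c * x⁻¹) x :=
    fun x hx => (hderiv x hx).add ((hasDerivAt_log hx.1.ne').const_mul c)
  have hanti : AntitoneOn (fun t => g t + c * log t) (Ioc 0 1) := by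
    refine antitoneOn_of_deriv_nonpos (convex_Ioc 0 1) ?_ ?_ ?_
    · exact hcont.add (continuousOn_const.mul (continuousOn_log.mono fun t ht => ht.1.ne'))
    · rw [interior_Ioc]
      exact fun x hx => (hderiv' x hx).differentiableAt.differentiableWithinAt
    · rw [interior_Ioc]
      intro x hx
      rw [(hderiv' x hx).deriv, ← div_eq_mul_inv]
      linarith [hle x hx, neg_div x c]
  have := hanti hy ⟨zero_lt_one, le_rfl⟩ hy.2
  simp only [log_one, mul_zero, add_zero] at this
  linarith

theorem IsGFamily.neg_four_mul_log_le {p : ℝ} {G : ℝ → ℝ → ℝ} (hG : IsGFamily p G)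
    (hp : 1 ≤ p) {a y : ℝ} (ha : 0 < a) (hy : y ∈ Ioc (0:ℝ) 1) :
    -4 * log y ≤ G a y := by
  obtain ⟨hcont, hG1, hderiv, hpos, -⟩ := hG a ha
  have := sub_mul_log_le_of_hasDerivAt_le hcont hderiv
    (fun x hx => by
      rw [neg_div, neg_le_neg_iff]
      exact four_div_le_Fa hp ha hx.1 (hpos x hx).le) hy
  linarith

theorem K_tendsto_atTop_at_zero (p : ℝ) (hp : 1 < p) (G : ℝ → ℝ → ℝ) (K : ℝ → ℝ)
    (hG : IsGFamily p G)
    (hK : ∀ y ∈ Set.Ioc (0:ℝ) 1,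
      Filter.Tendsto (fun a => G a y) Filter.atTop (nhds (K y))) :
    Filter.Tendsto K (nhdsWithin 0 (Set.Ioi 0)) Filter.atTop := by
  have hK_ge : ∀ y ∈ Ioc (0:ℝ) 1, -4 * log y ≤ K y := fun y hy =>
    ge_of_tendsto (hK y hy) <| (eventually_gt_atTop 0).mono fun a ha =>
      hG.neg_four_mul_log_le hp.le ha hy
  refine tendsto_atTop_mono' _ ?_
    (tendsto_log_nhdsGT_zero.const_mul_atBot_of_neg (r := -4) (by norm_num))
  filter_upwards [Ioc_mem_nhdsGT zero_lt_one] with y hy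
  exact hK_ge y hy
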